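/- arXiv:1205.2075 — 2 statements merged into one kernel-verified Lean document; each statement's English description precedes it below -/
import Mathlib

section
/- Let N ≥ 1, let g : ℝ^N → ℝ be measurable and Q-periodic with mean ḡ, and let M ≥ 0 satisfy |g(x) − ḡ| ≤ M for almost every x ∈ ℝ^N. Let c₁ > 0 be an L¹ Poincaré constant for Q. Then for every ε > 0 and every continuously differentiable function w : ℝ^N → ℝ with compact support, |∫_{ℝ^N} (g(x/ε) − ḡ) w(x) dx| ≤ c₁ M ε ∫_{ℝ^N} |∇w(x)| dx. -/
open MeasureTheory

/-- The unit cube `Q = [0,1]^N` in `ℝ^N`. -/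
def unitCube (N : ℕ) : Set (EuclideanSpace ℝ (Fin N)) :=
  {x | ∀ i, x i ∈ Set.Icc (0 : ℝ) 1}

/-!
Rescaling `x ↦ ε • x` reduces the estimate to `ε = 1`, the chain rule producing the factor `ε`.
For `ε = 1`, split `ℝ^N` into the integer translates `ℓ + Q` of the unit cube. By periodicity the
integral over `ℓ + Q` is `∫_Q (g - ḡ) w(ℓ + ·)`, and as `g - ḡ` has mean zero on `Q`, the function
`w(ℓ + ·)` may be replaced by its deviation from its mean over `Q`. Hence each cube contributes at
most `M ∫ |w - w̄| ≤ c₁ M ∫ |∇w|`, and summing over the lattice gives the claim.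
-/

open scoped Pointwise

namespace MeasureTheory.IsAddFundamentalDomain

variable {G α E : Type*} [AddGroup G] [Countable G] [AddAction G α] [MeasurableSpace α]
  [MeasurableConstVAdd G α] {s : Set α} {μ : Measure α} [VAddInvariantMeasure G α μ]
  [NormedAddCommGroup E] [NormedSpace ℝ E]

theorem hasSum_setIntegral_vadd (hs : IsAddFundamentalDomain G s μ) {f : α → E}
    (hf : Integrable f μ) :
    HasSum (fun g : G => ∫ x in s, f (g +ᵥ x) ∂μ) (∫ x, f x ∂μ) := by
  have h := hasSum_integral_measure (μ := fun g : G => μ.restrict (g +ᵥ s))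
    (by rwa [hs.sum_restrict])
  rw [hs.sum_restrict] at h
  convert h using 2 with g
  rw [← Set.image_vadd, (measurePreserving_vadd g μ).setIntegral_image_emb
    (measurableEmbedding_const_vadd g)]

theorem norm_integral_le_of_forall_setIntegral_vadd (hs : IsAddFundamentalDomain G s μ)
    {f : α → E} {F : α → ℝ} (hf : Integrable f μ) (hF : Integrable F μ) (C : ℝ)
    (hfF : ∀ g : G, ‖∫ x in s, f (g +ᵥ x) ∂μ‖ ≤ C * ∫ x in s, F (g +ᵥ x) ∂μ) :
    ‖∫ x, f x ∂μ‖ ≤ C * ∫ x, F x ∂μ :=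
  (hs.hasSum_setIntegral_vadd hf).norm_le_of_bounded
    ((hs.hasSum_setIntegral_vadd hF).mul_left C) hfF

end MeasureTheory.IsAddFundamentalDomain

theorem abs_integral_mul_le_of_integral_eq_zero {α : Type*} [MeasurableSpace α]
    {μ : Measure α} [IsFiniteMeasure μ] {h φ : α → ℝ} {M : ℝ}
    (hh : AEStronglyMeasurable h μ) (hM : ∀ᵐ x ∂μ, |h x| ≤ M) (h0 : ∫ x, h x ∂μ = 0)
    (hφ : Integrable φ μ) (c : ℝ) :
    |∫ x, h x * φ x ∂μ| ≤ M * ∫ x, |φ x - c| ∂μ := by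
  have hbd : ∀ᵐ x ∂μ, ‖h x‖ ≤ M := by simpa only [Real.norm_eq_abs] using hM
  have hφc : Integrable (fun x => φ x - c) μ := hφ.sub (integrable_const c)
  have hshift : ∫ x, h x * φ x ∂μ = ∫ x, h x * (φ x - c) ∂μ := by
    simp only [mul_sub]
    rw [integral_sub (hφ.bdd_mul hh hbd) ((integrable_const c).bdd_mul hh hbd),
      integral_mul_const, h0, zero_mul, sub_zero]
  calc |∫ x, h x * φ x ∂μ| = |∫ x, h x * (φ x - c) ∂μ| := by rw [hshift]
    _ ≤ ∫ x, |h x * (φ x - c)| ∂μ := abs_integral_le_integral_abs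
    _ ≤ ∫ x, M * |φ x - c| ∂μ := by
      refine integral_mono_ae (hφc.bdd_mul hh hbd).abs (hφc.abs.const_mul M) ?_
      filter_upwards [hM] with x hx
      rw [abs_mul]
      exact mul_le_mul_of_nonneg_right hx (abs_nonneg _)
    _ = M * ∫ x, |φ x - c| ∂μ := integral_const_mul M _

def IsIntegerPeriodic {N : ℕ} {β : Type*} (g : EuclideanSpace ℝ (Fin N) → β) : Prop :=
  ∀ (x : EuclideanSpace ℝ (Fin N)) (z : Fin N → ℤ), g (x + WithLp.toLp 2 fun i => (z i : ℝ)) = g x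

def IsL1PoincareConstant (N : ℕ) (c : ℝ) : Prop :=
  ∀ w : EuclideanSpace ℝ (Fin N) → ℝ, ContDiff ℝ 1 w →
    ∫ x in unitCube N, |w x - ∫ y in unitCube N, w y| ≤ c * ∫ x in unitCube N, ‖fderiv ℝ w x‖

section UnitCube

variable {N : ℕ}

theorem unitCube_eq_parallelepiped :
    unitCube N = parallelepiped (EuclideanSpace.basisFun (Fin N) ℝ) := by
  rw [← OrthonormalBasis.coe_toBasis, parallelepiped_basis_eq]
  rfl

theorem volume_unitCube : volume (unitCube N) = 1 := by
  rw [unitCube_eq_parallelepiped, OrthonormalBasis.volume_parallelepiped]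

theorem fundamentalDomain_basisFun_ae_eq_unitCube :
    ZSpan.fundamentalDomain (EuclideanSpace.basisFun (Fin N) ℝ).toBasis =ᵐ[volume] unitCube N := by
  rw [unitCube_eq_parallelepiped, ← OrthonormalBasis.coe_toBasis]
  exact ZSpan.fundamentalDomain_ae_parallelepiped _ volume

theorem IsIntegerPeriodic.apply_add_of_mem_span_basisFun {β : Type*}
    {g : EuclideanSpace ℝ (Fin N) → β} (hper : IsIntegerPeriodic g)
    {ℓ : EuclideanSpace ℝ (Fin N)}
    (hℓ : ℓ ∈ Submodule.span ℤ (Set.range (EuclideanSpace.basisFun (Fin N) ℝ).toBasis))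
    (x : EuclideanSpace ℝ (Fin N)) : g (ℓ + x) = g x := by
  choose z hz using (Module.Basis.mem_span_iff_repr_mem ℤ _ _).mp hℓ
  have : ℓ = WithLp.toLp 2 fun i => (z i : ℝ) := by
    ext i
    exact (hz i).symm
  rw [add_comm, this, hper]

theorem isCompact_unitCube : IsCompact (unitCube N) := by
  rw [unitCube_eq_parallelepiped, ← OrthonormalBasis.coe_toBasis,
    ← Module.Basis.coe_parallelepiped]
  exact TopologicalSpace.PositiveCompacts.isCompact _

instance isFiniteMeasure_restrict_unitCube : IsFiniteMeasure (volume.restrict (unitCube N)) :=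
  isFiniteMeasure_restrict.mpr (by simp [volume_unitCube])

end UnitCube

section Averaging

variable {N : ℕ} {g : EuclideanSpace ℝ (Fin N) → ℝ} {gbar M c₁ : ℝ}

theorem setIntegral_unitCube_sub_mean_eq_zero (hg : Measurable g)
    (hgbar : gbar = ∫ y in unitCube N, g y) (hbd : ∀ᵐ x, |g x - gbar| ≤ M) : ∫ x in unitCube N, (g x - gbar) = 0 := by
  have hint : IntegrableOn (fun x => g x - gbar) (unitCube N) :=
    Integrable.of_bound (hg.sub_const gbar).aestronglyMeasurable M
      (ae_restrict_of_ae (by simpa only [Real.norm_eq_abs] using hbd))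
  have hgint : IntegrableOn g (unitCube N) :=
    (hint.add (integrable_const gbar)).congr (ae_of_all _ fun x => sub_add_cancel (g x) gbar)
  rw [integral_sub hgint (integrable_const gbar), setIntegral_const, measureReal_def,
    volume_unitCube, hgbar]
  simp

theorem abs_setIntegral_unitCube_sub_mean_mul_le (hg : Measurable g)
    (hgbar : gbar = ∫ y in unitCube N, g y) (hM : 0 ≤ M) (hbd : ∀ᵐ x, |g x - gbar| ≤ M)
    (hpoinc : IsL1PoincareConstant N c₁) {φ : EuclideanSpace ℝ (Fin N) → ℝ}
    (hφ : ContDiff ℝ 1 φ) :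
    |∫ x in unitCube N, (g x - gbar) * φ x| ≤ c₁ * M * ∫ x in unitCube N, ‖fderiv ℝ φ x‖ :=
  calc |∫ x in unitCube N, (g x - gbar) * φ x|
      ≤ M * ∫ x in unitCube N, |φ x - ∫ y in unitCube N, φ y| :=
        abs_integral_mul_le_of_integral_eq_zero (hg.sub_const gbar).aestronglyMeasurable
          (ae_restrict_of_ae hbd) (setIntegral_unitCube_sub_mean_eq_zero hg hgbar hbd)
          (hφ.continuous.continuousOn.integrableOn_compact isCompact_unitCube) _
    _ ≤ M * (c₁ * ∫ x in unitCube N, ‖fderiv ℝ φ x‖) :=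
        mul_le_mul_of_nonneg_left (hpoinc φ hφ) hM
    _ = c₁ * M * ∫ x in unitCube N, ‖fderiv ℝ φ x‖ := by ring

theorem abs_integral_sub_mean_mul_le (hg : Measurable g) (hper : IsIntegerPeriodic g)
    (hgbar : gbar = ∫ y in unitCube N, g y) (hM : 0 ≤ M) (hbd : ∀ᵐ x, |g x - gbar| ≤ M)
    (hpoinc : IsL1PoincareConstant N c₁) {v : EuclideanSpace ℝ (Fin N) → ℝ}
    (hv : ContDiff ℝ 1 v) (hcs : HasCompactSupport v) :
    |∫ x, (g x - gbar) * v x| ≤ c₁ * M * ∫ x, ‖fderiv ℝ v x‖ := by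
  have hf : Integrable (fun x => (g x - gbar) * v x) :=
    (hv.continuous.integrable_of_hasCompactSupport hcs).bdd_mul
      (hg.sub_const gbar).aestronglyMeasurable (by simpa only [Real.norm_eq_abs] using hbd)
  have hF : Integrable (fun x => ‖fderiv ℝ v x‖) :=
    (hv.continuous_fderiv one_ne_zero).norm.integrable_of_hasCompactSupport
      (hcs.fderiv (𝕜 := ℝ)).norm
  set L := Submodule.span ℤ (Set.range (EuclideanSpace.basisFun (Fin N) ℝ).toBasis)
  -- Mathlib registers this instance for the underlying `AddSubgroup` only.
  have : VAddInvariantMeasure L (EuclideanSpace ℝ (Fin N)) volume :=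
    inferInstanceAs (VAddInvariantMeasure L.toAddSubgroup _ _)
  have hD := ZSpan.isAddFundamentalDomain (EuclideanSpace.basisFun (Fin N) ℝ).toBasis volume
  have hDQ := fundamentalDomain_basisFun_ae_eq_unitCube (N := N)
  rw [← Real.norm_eq_abs]
  refine hD.norm_integral_le_of_forall_setIntegral_vadd hf hF _ fun ℓ => ?_
  rw [setIntegral_congr_set hDQ, setIntegral_congr_set hDQ, Real.norm_eq_abs]
  obtain ⟨ℓ, hℓ⟩ := ℓ
  calc |∫ x in unitCube N, (g (_ +ᵥ x) - gbar) * v (_ +ᵥ x)|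
      = |∫ x in unitCube N, (g x - gbar) * v (ℓ + x)| := by
        simp_rw [Submodule.vadd_def, vadd_eq_add, hper.apply_add_of_mem_span_basisFun hℓ]
    _ ≤ c₁ * M * ∫ x in unitCube N, ‖fderiv ℝ (fun y => v (ℓ + y)) x‖ :=
        abs_setIntegral_unitCube_sub_mean_mul_le hg hgbar hM hbd hpoinc
          (hv.comp (contDiff_const.add contDiff_id))
    _ = _ := by simp_rw [fderiv_comp_add_left, Submodule.vadd_def, vadd_eq_add]

end Averaging

theorem averaging_estimate_general
    (N : ℕ)
    (g : EuclideanSpace ℝ (Fin N) → ℝ) (hgm : Measurable g)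
    (hper : ∀ (x : EuclideanSpace ℝ (Fin N)) (z : Fin N → ℤ),
      g (x + (show EuclideanSpace ℝ (Fin N) from WithLp.toLp 2 fun i => (z i : ℝ))) = g x)
    (gbar : ℝ) (hgbar : gbar = ∫ y in unitCube N, g y)
    (M : ℝ) (hM : 0 ≤ M)
    (hbd : ∀ᵐ x : EuclideanSpace ℝ (Fin N), |g x - gbar| ≤ M)
    (c₁ : ℝ)
    (hpoinc : ∀ w : EuclideanSpace ℝ (Fin N) → ℝ, ContDiff ℝ 1 w →
      ∫ x in unitCube N, |w x - ∫ y in unitCube N, w y| ≤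
        c₁ * ∫ x in unitCube N, ‖fderiv ℝ w x‖) :
    ∀ ε > (0 : ℝ), ∀ w : EuclideanSpace ℝ (Fin N) → ℝ,
      ContDiff ℝ 1 w → HasCompactSupport w →
      |∫ x, (g (ε⁻¹ • x) - gbar) * w x| ≤ c₁ * M * ε * ∫ x, ‖fderiv ℝ w x‖ := by
  intro ε hε w hw hcw
  have hrescale (f : EuclideanSpace ℝ (Fin N) → ℝ) : ∫ x, f x = ε ^ N * ∫ y, f (ε • y) := by
    simpa [smul_smul, hε.ne'] using
      Measure.integral_comp_inv_smul_of_nonneg volume (fun y => f (ε • y)) hε.le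
  have hnorm (y : EuclideanSpace ℝ (Fin N)) :
      ‖fderiv ℝ (fun x => w (ε • x)) y‖ = ε * ‖fderiv ℝ w (ε • y)‖ := by
    rw [fderiv_comp_smul, norm_smul, Real.norm_of_nonneg hε.le]
  calc |∫ x, (g (ε⁻¹ • x) - gbar) * w x|
      = ε ^ N * |∫ y, (g y - gbar) * w (ε • y)| := by
        rw [hrescale, abs_mul, abs_of_pos (by positivity)]
        simp [smul_smul, hε.ne']
    _ ≤ ε ^ N * (c₁ * M * ∫ y, ‖fderiv ℝ (fun x => w (ε • x)) y‖) := by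
        gcongr
        exact abs_integral_sub_mean_mul_le hgm hper hgbar hM hbd hpoinc
          (hw.comp (contDiff_const_smul ε)) (hcw.comp_smul hε.ne')
    _ = c₁ * M * ε * ∫ x, ‖fderiv ℝ w x‖ := by
        rw [hrescale fun x => ‖fderiv ℝ w x‖]
        simp_rw [hnorm, integral_const_mul]
        ring

/-- the core averaging estimate (Oleinik-type lemma): for a `Q`-periodic
function `g` with mean `ḡ`, `|g - ḡ| ≤ M` a.e., and `c₁` an `L¹` Poincaré constant for `Q`,
for every `ε > 0` and every `C¹` compactly supported `w`,
`|∫ (g(x/ε) − ḡ) w(x) dx| ≤ c₁ M ε ∫ |∇w|`. -/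
theorem averaging_estimate
    (N : ℕ) (hN : 1 ≤ N)
    (g : EuclideanSpace ℝ (Fin N) → ℝ) (hgm : Measurable g)
    (hper : ∀ (x : EuclideanSpace ℝ (Fin N)) (z : Fin N → ℤ),
      g (x + (show EuclideanSpace ℝ (Fin N) from WithLp.toLp 2 fun i => (z i : ℝ))) = g x)
    (gbar : ℝ) (hgbar : gbar = ∫ y in unitCube N, g y)
    (M : ℝ) (hM : 0 ≤ M)
    (hbd : ∀ᵐ x : EuclideanSpace ℝ (Fin N), |g x - gbar| ≤ M)
    (c₁ : ℝ) (hc₁ : 0 < c₁)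
    (hpoinc : ∀ w : EuclideanSpace ℝ (Fin N) → ℝ, ContDiff ℝ 1 w →
      ∫ x in unitCube N, |w x - ∫ y in unitCube N, w y| ≤
        c₁ * ∫ x in unitCube N, ‖fderiv ℝ w x‖) :
    ∀ ε > (0 : ℝ), ∀ w : EuclideanSpace ℝ (Fin N) → ℝ,
      ContDiff ℝ 1 w → HasCompactSupport w →
      |∫ x, (g (ε⁻¹ • x) - gbar) * w x| ≤ c₁ * M * ε * ∫ x, ‖fderiv ℝ w x‖ :=
  averaging_estimate_general N g hgm hper gbar hgbar M hM hbd c₁ hpoinc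
end

section
/- Let N ≥ 1, 1 < p < ∞, and let Ω ⊂ ℝ^N be a bounded open set. Let g : ℝ^N → ℝ be measurable and Q-periodic with mean ḡ, and let M ≥ 0 satisfy |g(x) − ḡ| ≤ M for almost every x ∈ ℝ^N. Let c₁ > 0 be an L¹ Poincaré constant for Q. Then for every ε > 0 and every u ∈ C¹_c(Ω), |∫_Ω (g(x/ε) − ḡ) |u(x)|^p dx| ≤ p c₁ M ε (∫_Ω |u|^p dx)^{(p−1)/p} (∫_Ω |∇u|^p dx)^{1/p}. -/
/-!
Cut `ℝ^N` into the lattice cells `z + [0,1)^N`. On a cell, `g - ḡ` has mean zero and is bounded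
by `M`, so `∫ (g - ḡ) w = ∫ (g - ḡ) (w - w̄)` is at most `M` times the `L¹` oscillation of `w`,
hence at most `M c₁ ∫ |∇w|` by the Poincaré inequality transported to the cell by periodicity.
Summing over the cells gives `|∫ (g - ḡ) w| ≤ M c₁ ∫ |∇w|` for `w ∈ C¹_c`, and the substitution
`x = ε y` turns this into `|∫ (g(x/ε) - ḡ) w| ≤ M c₁ ε ∫ |∇w|`. Take `w = |u|^p`: its gradient is
at most `p |u|^(p-1) |∇u|`, and Hölder's inequality with exponents `p/(p-1)` and `p` concludes.
-/

open MeasureTheory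

open Set Function Module

section

variable {α ι : Type*} [MeasurableSpace α] {μ : Measure α} [Countable ι]

theorem abs_integral_le_of_abs_setIntegral_le {s : ι → Set α} (hs : ∀ i, MeasurableSet (s i))
    (hd : Pairwise (Disjoint on s)) (hU : ⋃ i, s i = univ) {f h : α → ℝ}
    (hf : Integrable f μ) (hh : Integrable h μ)
    (hle : ∀ i, |∫ x in s i, f x ∂μ| ≤ ∫ x in s i, h x ∂μ) :
    |∫ x, f x ∂μ| ≤ ∫ x, h x ∂μ := by
  have hasSum_setIntegral {F : α → ℝ} (hF : Integrable F μ) :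
      HasSum (fun i => ∫ x in s i, F x ∂μ) (∫ x, F x ∂μ) := by
    simpa [hU] using hasSum_integral_iUnion hs hd (hU ▸ hF.integrableOn)
  have hf' := hasSum_setIntegral hf
  have hh' := hasSum_setIntegral hh
  exact abs_le.2 ⟨by simpa using hasSum_le (fun i => neg_le_of_abs_le (hle i)) hh'.neg hf',
    hasSum_le (fun i => le_of_abs_le (hle i)) hf' hh'⟩

theorem abs_setIntegral_mul_le_of_setIntegral_eq_zero {s : Set α} (hs : μ s ≠ ⊤)
    {f w : α → ℝ} {M : ℝ} (hf : AEStronglyMeasurable f (μ.restrict s))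
    (hf0 : ∫ x in s, f x ∂μ = 0) (hM : ∀ᵐ x ∂μ.restrict s, |f x| ≤ M)
    (hw : IntegrableOn w s μ) (m : ℝ) :
    |∫ x in s, f x * w x ∂μ| ≤ M * ∫ x in s, |w x - m| ∂μ := by
  have hM' : ∀ᵐ x ∂μ.restrict s, ‖f x‖ ≤ M := hM
  have hwm : IntegrableOn (fun x => w x - m) s μ := hw.sub (integrableOn_const hs)
  have hfw := hw.bdd_mul hf hM'
  have hfwm := hwm.bdd_mul hf hM'
  have mean_free : ∫ x in s, f x * w x ∂μ = ∫ x in s, f x * (w x - m) ∂μ := by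
    have : ∫ x in s, (f x * w x - f x * (w x - m)) ∂μ = 0 := by
      simp_rw [← mul_sub, sub_sub_cancel, integral_mul_const, hf0, zero_mul]
    rwa [integral_sub hfw hfwm, sub_eq_zero] at this
  calc |∫ x in s, f x * w x ∂μ| = |∫ x in s, f x * (w x - m) ∂μ| := by rw [mean_free]
    _ ≤ ∫ x in s, |f x * (w x - m)| ∂μ := abs_integral_le_integral_abs
    _ ≤ ∫ x in s, M * |w x - m| ∂μ := by
        refine integral_mono_ae hfwm.abs (hwm.abs.const_mul M) ?_
        filter_upwards [hM] with x hx
        rw [abs_mul]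
        exact mul_le_mul_of_nonneg_right hx (abs_nonneg _)
    _ = M * ∫ x in s, |w x - m| ∂μ := integral_const_mul M _

end

theorem abs_integral_comp_inv_smul_mul_le {E : Type*} [NormedAddCommGroup E] [NormedSpace ℝ E]
    [MeasurableSpace E] [BorelSpace E] [FiniteDimensional ℝ E] {μ : Measure E}
    [μ.IsAddHaarMeasure] {f : E → ℝ} {K : ℝ}
    (hf : ∀ w : E → ℝ, ContDiff ℝ 1 w → HasCompactSupport w →
      |∫ y, f y * w y ∂μ| ≤ K * ∫ y, ‖fderiv ℝ w y‖ ∂μ)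
    {ε : ℝ} (hε : 0 < ε) {v : E → ℝ} (hv : ContDiff ℝ 1 v) (hvs : HasCompactSupport v) :
    |∫ x, f (ε⁻¹ • x) * v x ∂μ| ≤ K * ε * ∫ x, ‖fderiv ℝ v x‖ ∂μ := by
  have hεn : (0 : ℝ) < ε ^ finrank ℝ E := by positivity
  have rescale_lhs : ∫ x, f (ε⁻¹ • x) * v x ∂μ =
      ε ^ finrank ℝ E * ∫ y, f y * v (ε • y) ∂μ := by
    simpa [smul_inv_smul₀ hε.ne'] using
      Measure.integral_comp_inv_smul_of_nonneg μ (fun y => f y * v (ε • y)) hε.le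
  have rescale_rhs : ε ^ finrank ℝ E * ∫ y, ‖fderiv ℝ (fun y => v (ε • y)) y‖ ∂μ =
      ε * ∫ x, ‖fderiv ℝ v x‖ ∂μ := by
    simp_rw [fderiv_comp_smul, norm_smul, Real.norm_of_nonneg hε.le, integral_const_mul,
      Measure.integral_comp_smul_of_nonneg μ (fun x => ‖fderiv ℝ v x‖) ε (hR := hε.le),
      smul_eq_mul]
    field_simp
  calc |∫ x, f (ε⁻¹ • x) * v x ∂μ|
      = ε ^ finrank ℝ E * |∫ y, f y * v (ε • y) ∂μ| := by
        rw [rescale_lhs, abs_mul, abs_of_pos hεn]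
    _ ≤ ε ^ finrank ℝ E * (K * ∫ y, ‖fderiv ℝ (fun y => v (ε • y)) y‖ ∂μ) :=
        mul_le_mul_of_nonneg_left
          (hf _ (hv.comp (contDiff_const_smul ε)) (hvs.comp_smul hε.ne')) hεn.le
    _ = K * ε * ∫ x, ‖fderiv ℝ v x‖ ∂μ := by rw [mul_left_comm, rescale_rhs]; ring

theorem integral_norm_rpow_sub_one_mul_norm_le {α E F : Type*} [MeasurableSpace α]
    {μ : Measure α} [NormedAddCommGroup E] [NormedAddCommGroup F] {p : ℝ} (hp : 1 < p)
    {f : α → E} {h : α → F}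
    (hf : MemLp f (ENNReal.ofReal p) μ) (hh : MemLp h (ENNReal.ofReal p) μ) :
    ∫ x, ‖f x‖ ^ (p - 1) * ‖h x‖ ∂μ ≤
      (∫ x, ‖f x‖ ^ p ∂μ) ^ ((p - 1) / p) * (∫ x, ‖h x‖ ^ p ∂μ) ^ (1 / p) := by
  have hpq : (p / (p - 1)).HolderConjugate p :=
    ((Real.holderConjugate_iff_eq_conjExponent hp).2 rfl).symm
  have hf' : MemLp (fun x => ‖f x‖ ^ (p - 1)) (ENNReal.ofReal (p / (p - 1))) μ := by
    have := hf.norm_rpow_div (ENNReal.ofReal (p - 1))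
    rwa [ENNReal.toReal_ofReal (by linarith), ← ENNReal.ofReal_div_of_pos (by linarith)] at this
  have := integral_mul_le_Lp_mul_Lq_of_nonneg hpq
    (ae_of_all _ fun x => Real.rpow_nonneg (norm_nonneg _) _)
    (ae_of_all _ fun x => norm_nonneg _) hf' hh.norm
  have hexp (x : α) : (‖f x‖ ^ (p - 1)) ^ (p / (p - 1)) = ‖f x‖ ^ p := by
    rw [← Real.rpow_mul (norm_nonneg _), mul_div_cancel₀ p (by linarith : p - 1 ≠ 0)]
  simpa only [hexp, one_div_div] using this

theorem integral_norm_fderiv_norm_rpow_le {E F : Type*} [NormedAddCommGroup E] [NormedSpace ℝ E]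
    [MeasurableSpace E] [BorelSpace E] {μ : Measure E} [IsFiniteMeasureOnCompacts μ]
    [NormedAddCommGroup F] [InnerProductSpace ℝ F] {u : E → F} (hu : ContDiff ℝ 1 u)
    (hcu : HasCompactSupport u) {p : ℝ} (hp : 1 < p) :
    ∫ x, ‖fderiv ℝ (fun x => ‖u x‖ ^ p) x‖ ∂μ ≤
      p * (∫ x, ‖u x‖ ^ p ∂μ) ^ ((p - 1) / p) *
        (∫ x, ‖fderiv ℝ u x‖ ^ p ∂μ) ^ (1 / p) := by
  have hDu := hu.continuous_fderiv one_ne_zero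
  have hv := hu.norm_rpow hp
  have hvs : HasCompactSupport fun x => ‖u x‖ ^ p :=
    hcu.comp_left (g := fun t : F => ‖t‖ ^ p) (by simp [Real.zero_rpow (by linarith : p ≠ 0)])
  have hprod : Integrable (fun x => ‖u x‖ ^ (p - 1) * ‖fderiv ℝ u x‖) μ :=
    ((hu.continuous.norm.rpow_const fun _ => Or.inr (by linarith)).mul hDu.norm
      ).integrable_of_hasCompactSupport (hcu.fderiv ℝ).norm.mul_left
  calc ∫ x, ‖fderiv ℝ (fun x => ‖u x‖ ^ p) x‖ ∂μ
      ≤ ∫ x, p * (‖u x‖ ^ (p - 1) * ‖fderiv ℝ u x‖) ∂μ :=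
        integral_mono ((hv.continuous_fderiv one_ne_zero).norm.integrable_of_hasCompactSupport
            (hvs.fderiv ℝ).norm) (hprod.const_mul p) fun x =>
          (norm_fderiv_norm_rpow_le (hu.differentiable one_ne_zero) hp).trans_eq (mul_assoc ..)
    _ = p * ∫ x, ‖u x‖ ^ (p - 1) * ‖fderiv ℝ u x‖ ∂μ := integral_const_mul p _
    _ ≤ p * ((∫ x, ‖u x‖ ^ p ∂μ) ^ ((p - 1) / p) *
          (∫ x, ‖fderiv ℝ u x‖ ^ p ∂μ) ^ (1 / p)) :=
        mul_le_mul_of_nonneg_left (integral_norm_rpow_sub_one_mul_norm_le hp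
          (hu.continuous.memLp_of_hasCompactSupport hcu)
          (hDu.memLp_of_hasCompactSupport (hcu.fderiv ℝ))) (by linarith)
    _ = _ := (mul_assoc ..).symm

namespace unitCube

variable {N : ℕ}

theorem eq_preimage_ofLp :
    unitCube N = (MeasurableEquiv.toLp 2 (Fin N → ℝ)).symm ⁻¹' pi univ fun _ => Icc 0 1 := by
  ext x; simp [unitCube, Pi.le_def, forall_and]

theorem volume_eq_one : volume (unitCube N) = 1 := by
  rw [eq_preimage_ofLp,
    (EuclideanSpace.volume_preserving_symm_measurableEquiv_toLp _).measure_preimage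
      (MeasurableSet.univ_pi fun _ => measurableSet_Icc).nullMeasurableSet, volume_pi_pi]
  simp

end unitCube

/-- The half-open lattice cell `z + [0,1)^N`. -/
def intCell (N : ℕ) (z : Fin N → ℤ) : Set (EuclideanSpace ℝ (Fin N)) :=
  {x | ∀ i, ⌊x i⌋ = z i}

namespace intCell

variable {N : ℕ}

theorem measurableSet (z : Fin N → ℤ) : MeasurableSet (intCell N z) := by
  simp only [intCell, ofPred_forall]
  exact .iInter fun i => measurableSet_eq_fun (Int.measurable_floor.comp
    ((measurable_pi_apply i).comp (MeasurableEquiv.toLp 2 _).symm.measurable)) measurable_const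

theorem pairwise_disjoint : Pairwise (Disjoint on intCell N) := fun _ _ hne =>
  disjoint_left.2 fun _ hx hx' => hne <| funext fun i => (hx i).symm.trans (hx' i)

theorem iUnion_eq_univ : ⋃ z, intCell N z = univ :=
  eq_univ_of_forall fun x => mem_iUnion.2 ⟨fun i => ⌊x i⌋, fun _ => rfl⟩

theorem preimage_add (z : Fin N → ℤ) :
    (· + WithLp.toLp 2 (fun i => (z i : ℝ))) ⁻¹' intCell N z = intCell N 0 := by
  ext x; simp [intCell]

theorem zero_ae_eq_unitCube : intCell N 0 =ᵐ[volume] unitCube N := by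
  have hIco : intCell N 0 =
      (MeasurableEquiv.toLp 2 (Fin N → ℝ)).symm ⁻¹' pi univ fun _ => Ico 0 1 := by
    ext x; simp [intCell, Int.floor_eq_zero_iff]
  rw [hIco, unitCube.eq_preimage_ofLp]
  exact (EuclideanSpace.volume_preserving_symm_measurableEquiv_toLp _).quasiMeasurePreserving
    |>.preimage_ae_eq Measure.pi_Ico_ae_eq_pi_Icc

theorem setIntegral_eq_setIntegral_unitCube {E : Type*} [NormedAddCommGroup E] [NormedSpace ℝ E]
    (z : Fin N → ℤ) (F : EuclideanSpace ℝ (Fin N) → E) :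
    ∫ x in intCell N z, F x =
      ∫ y in unitCube N, F (y + WithLp.toLp 2 (fun i => (z i : ℝ))) := by
  rw [← setIntegral_congr_set zero_ae_eq_unitCube, ← preimage_add z,
    (measurePreserving_add_right volume _).setIntegral_preimage_emb
      (measurableEmbedding_addRight _)]

end intCell

section Periodic

variable {N : ℕ} {g : EuclideanSpace ℝ (Fin N) → ℝ} {gbar M c₁ : ℝ}

theorem setIntegral_unitCube_sub_eq_zero (hgm : Measurable g)
    (hbd : ∀ᵐ x : EuclideanSpace ℝ (Fin N), |g x - gbar| ≤ M)
    (hgbar : gbar = ∫ y in unitCube N, g y) :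
    ∫ y in unitCube N, (g y - gbar) = 0 := by
  have hfin : volume (unitCube N) ≠ ⊤ := by simp [unitCube.volume_eq_one]
  have hsub : IntegrableOn (fun y => g y - gbar) (unitCube N) :=
    Measure.integrableOn_of_bounded hfin (hgm.sub measurable_const).aestronglyMeasurable
      (ae_restrict_of_ae hbd)
  have hg : IntegrableOn g (unitCube N) := by
    simpa only [Pi.add_def, sub_add_cancel] using hsub.add (integrableOn_const hfin (C := gbar))
  rw [integral_sub hg (integrableOn_const hfin), setIntegral_const, measureReal_def,
    unitCube.volume_eq_one, ← hgbar]
  simp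

theorem abs_integral_periodic_mul_le
    (hgm : Measurable g)
    (hper : ∀ (x : EuclideanSpace ℝ (Fin N)) (z : Fin N → ℤ),
      g (x + (show EuclideanSpace ℝ (Fin N) from WithLp.toLp 2 (fun i => (z i : ℝ)))) = g x)
    (hg0 : ∫ y in unitCube N, (g y - gbar) = 0) (hM : 0 ≤ M)
    (hbd : ∀ᵐ x : EuclideanSpace ℝ (Fin N), |g x - gbar| ≤ M)
    (hpoinc : ∀ w : EuclideanSpace ℝ (Fin N) → ℝ, ContDiff ℝ 1 w →
      ∫ x in unitCube N, |w x - ∫ y in unitCube N, w y| ≤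
        c₁ * ∫ x in unitCube N, ‖fderiv ℝ w x‖)
    {w : EuclideanSpace ℝ (Fin N) → ℝ} (hw : ContDiff ℝ 1 w)
    (hws : HasCompactSupport w) :
    |∫ y, (g y - gbar) * w y| ≤ M * c₁ * ∫ y, ‖fderiv ℝ w y‖ := by
  have hwi : Integrable w := hw.continuous.integrable_of_hasCompactSupport hws
  have hgm' : AEStronglyMeasurable (fun y => g y - gbar) volume :=
    (hgm.sub measurable_const).aestronglyMeasurable
  have hDw : Integrable fun y => M * c₁ * ‖fderiv ℝ w y‖ :=
    ((hw.continuous_fderiv one_ne_zero).norm.integrable_of_hasCompactSupport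
      (hws.fderiv ℝ).norm).const_mul _
  rw [← integral_const_mul]
  refine abs_integral_le_of_abs_setIntegral_le intCell.measurableSet intCell.pairwise_disjoint
    intCell.iUnion_eq_univ (hwi.bdd_mul hgm' hbd) hDw fun z => ?_
  set c : EuclideanSpace ℝ (Fin N) := WithLp.toLp 2 fun i => (z i : ℝ)
  have hwc : ContDiff ℝ 1 fun y => w (y + c) := hw.comp (contDiff_id.add contDiff_const)
  rw [intCell.setIntegral_eq_setIntegral_unitCube, intCell.setIntegral_eq_setIntegral_unitCube]
  simp only [hper]
  calc |∫ y in unitCube N, (g y - gbar) * w (y + c)|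
      ≤ M * ∫ y in unitCube N, |w (y + c) - ∫ y in unitCube N, w (y + c)| :=
        abs_setIntegral_mul_le_of_setIntegral_eq_zero (by simp [unitCube.volume_eq_one])
          hgm'.restrict hg0 (ae_restrict_of_ae hbd) (hwi.comp_add_right c).integrableOn _
    _ ≤ M * (c₁ * ∫ y in unitCube N, ‖fderiv ℝ (fun y => w (y + c)) y‖) :=
        mul_le_mul_of_nonneg_left (hpoinc _ hwc) hM
    _ = ∫ y in unitCube N, M * c₁ * ‖fderiv ℝ w (y + c)‖ := by
        simp_rw [fderiv_comp_add_right, integral_const_mul, mul_assoc]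

end Periodic

theorem averaging_estimate_Lp_general
    (N : ℕ) (p : ℝ) (hp : 1 < p)
    (Ω : Set (EuclideanSpace ℝ (Fin N)))
    (g : EuclideanSpace ℝ (Fin N) → ℝ) (hgm : Measurable g)
    (hper : ∀ (x : EuclideanSpace ℝ (Fin N)) (z : Fin N → ℤ),
      g (x + (show EuclideanSpace ℝ (Fin N) from WithLp.toLp 2 (fun i => (z i : ℝ)))) = g x)
    (gbar : ℝ) (hgbar : gbar = ∫ y in unitCube N, g y)
    (M : ℝ) (hM : 0 ≤ M)
    (hbd : ∀ᵐ x : EuclideanSpace ℝ (Fin N), |g x - gbar| ≤ M)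
    (c₁ : ℝ) (hc₁ : 0 < c₁)
    (hpoinc : ∀ w : EuclideanSpace ℝ (Fin N) → ℝ, ContDiff ℝ 1 w →
      ∫ x in unitCube N, |w x - ∫ y in unitCube N, w y| ≤
        c₁ * ∫ x in unitCube N, ‖fderiv ℝ w x‖) :
    ∀ ε > (0 : ℝ), ∀ u : EuclideanSpace ℝ (Fin N) → ℝ,
      ContDiff ℝ 1 u → HasCompactSupport u → tsupport u ⊆ Ω →
      |∫ x in Ω, (g (ε⁻¹ • x) - gbar) * |u x| ^ p| ≤
        p * c₁ * M * ε * (∫ x in Ω, |u x| ^ p) ^ ((p - 1) / p) *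
          (∫ x in Ω, ‖fderiv ℝ u x‖ ^ p) ^ (1 / p) := by
  intro ε hε u hu hcu hsupp
  have hp0 : p ≠ 0 := by linarith
  have hvanish (x : EuclideanSpace ℝ (Fin N)) (hx : x ∉ Ω) : u x = 0 ∧ fderiv ℝ u x = 0 :=
    have hx' : x ∉ tsupport u := fun h => hx (hsupp h)
    ⟨image_eq_zero_of_notMem_tsupport hx', fderiv_of_notMem_tsupport ℝ hx'⟩
  simp only [← Real.norm_eq_abs (u _)]
  rw [setIntegral_eq_integral_of_forall_compl_eq_zero fun x hx => by simp [(hvanish x hx).1, hp0],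
    setIntegral_eq_integral_of_forall_compl_eq_zero fun x hx => by simp [(hvanish x hx).1, hp0],
    setIntegral_eq_integral_of_forall_compl_eq_zero fun x hx => by simp [(hvanish x hx).2, hp0]]
  calc |∫ x, (g (ε⁻¹ • x) - gbar) * ‖u x‖ ^ p|
      ≤ M * c₁ * ε * ∫ x, ‖fderiv ℝ (fun x => ‖u x‖ ^ p) x‖ :=
        abs_integral_comp_inv_smul_mul_le (f := fun y => g y - gbar)
          (fun _ => abs_integral_periodic_mul_le hgm hper
            (setIntegral_unitCube_sub_eq_zero hgm hbd hgbar) hM hbd hpoinc)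
          hε (hu.norm_rpow hp) (hcu.comp_left (g := fun t : ℝ => ‖t‖ ^ p) (by simp [hp0]))
    _ ≤ M * c₁ * ε * (p * (∫ x, ‖u x‖ ^ p) ^ ((p - 1) / p) *
          (∫ x, ‖fderiv ℝ u x‖ ^ p) ^ (1 / p)) :=
        mul_le_mul_of_nonneg_left (integral_norm_fderiv_norm_rpow_le hu hcu hp) (by positivity)
    _ = _ := by ring

/-- Theorem 3.1 of the paper: for a `Q`-periodic `g` with mean `ḡ`,
`|g − ḡ| ≤ M` a.e., `c₁` an `L¹` Poincaré constant for `Q`, a bounded open `Ω`,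
every `ε > 0` and every `u ∈ C¹_c(Ω)`:
`|∫_Ω (g(x/ε) − ḡ)|u|^p dx| ≤ p c₁ M ε (∫_Ω |u|^p)^{(p−1)/p} (∫_Ω |∇u|^p)^{1/p}`. -/
theorem averaging_estimate_Lp
    (N : ℕ) (hN : 1 ≤ N) (p : ℝ) (hp : 1 < p)
    (Ω : Set (EuclideanSpace ℝ (Fin N))) (hΩo : IsOpen Ω)
    (hΩb : Bornology.IsBounded Ω)
    (g : EuclideanSpace ℝ (Fin N) → ℝ) (hgm : Measurable g)
    (hper : ∀ (x : EuclideanSpace ℝ (Fin N)) (z : Fin N → ℤ),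
      g (x + (show EuclideanSpace ℝ (Fin N) from WithLp.toLp 2 (fun i => (z i : ℝ)))) = g x)
    (gbar : ℝ) (hgbar : gbar = ∫ y in unitCube N, g y)
    (M : ℝ) (hM : 0 ≤ M)
    (hbd : ∀ᵐ x : EuclideanSpace ℝ (Fin N), |g x - gbar| ≤ M)
    (c₁ : ℝ) (hc₁ : 0 < c₁)
    (hpoinc : ∀ w : EuclideanSpace ℝ (Fin N) → ℝ, ContDiff ℝ 1 w →
      ∫ x in unitCube N, |w x - ∫ y in unitCube N, w y| ≤
        c₁ * ∫ x in unitCube N, ‖fderiv ℝ w x‖) :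
    ∀ ε > (0 : ℝ), ∀ u : EuclideanSpace ℝ (Fin N) → ℝ,
      ContDiff ℝ 1 u → HasCompactSupport u → tsupport u ⊆ Ω →
      |∫ x in Ω, (g (ε⁻¹ • x) - gbar) * |u x| ^ p| ≤
        p * c₁ * M * ε * (∫ x in Ω, |u x| ^ p) ^ ((p - 1) / p) *
          (∫ x in Ω, ‖fderiv ℝ u x‖ ^ p) ^ (1 / p) :=
  averaging_estimate_Lp_general N p hp Ω g hgm hper gbar hgbar M hM hbd c₁ hc₁ hpoinc
end
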